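/- arXiv:1212.3688 — 2 statements merged into one kernel-verified Lean document; each statement's English description precedes it below -/
import Mathlib

section
/- Let X be a real Banach space, let f : X → ℝ be locally Lipschitz, and let x ∈ X, with f Lipschitz of constant K on some neighborhood of x. Then the Clarke subdifferential ∂f(x) = {x* ∈ X* : ⟨x*, h⟩ ≤ f⁰(x;h) for all h ∈ X} is nonempty, convex, bounded (every x* ∈ ∂f(x) satisfies ‖x*‖_{X*} ≤ K), and compact in the weak* topology of X*. -/
/-!
Near `x` every difference quotient `(f (y + t • h) - f y) / t` is bounded by `K * ‖h‖`, so
`h ↦ f⁰(x;h)` is a real-valued function bounded by `K * ‖h‖`; it is positively homogeneous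
(rescale `t`) and subadditive (split the increment along `h₁ + h₂` at the intermediate point
`y + t • h₁`, which still tends to `x`). The Hahn–Banach theorem then yields a linear functional
below `f⁰(x;·)`, continuous by the bound. Every element of `∂f(x)` obeys the same bound, so
`‖x*‖ ≤ K`. As an intersection of half-spaces `{x* | x* h ≤ f⁰(x;h)}`, `∂f(x)` is convex and
weak*-closed, hence weak*-compact by Banach–Alaoglu.
-/

open Filter Topology

/-- The Clarke generalized directional derivative of `f` at `x` in direction `h`:
`f⁰(x;h) = limsup_{y → x, t ↓ 0} (f(y + t h) − f(y)) / t`. -/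
noncomputable def clarkeDeriv {X : Type*} [NormedAddCommGroup X] [NormedSpace ℝ X]
    (f : X → ℝ) (x h : X) : ℝ :=
  limsup (fun q : X × ℝ => (f (q.1 + q.2 • h) - f q.1) / q.2) ((𝓝 x) ×ˢ (𝓝[>] (0 : ℝ)))

/-- The Clarke subdifferential `∂f(x) = {x* ∈ X* : ⟨x*, h⟩ ≤ f⁰(x;h) for all h ∈ X}`. -/
def clarkeSubdiff {X : Type*} [NormedAddCommGroup X] [NormedSpace ℝ X]
    (f : X → ℝ) (x : X) : Set (X →L[ℝ] ℝ) :=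
  {φ | ∀ h : X, φ h ≤ clarkeDeriv f x h}

open Set

section HahnBanach

variable {E : Type*} [SeminormedAddCommGroup E] [NormedSpace ℝ E]

theorem LinearMap.abs_apply_le_of_le_mul_norm {g : E →ₗ[ℝ] ℝ} {C : ℝ}
    (hg : ∀ v, g v ≤ C * ‖v‖) (v : E) : |g v| ≤ C * ‖v‖ :=
  abs_le.2 ⟨neg_le.1 (by simpa using hg (-v)), hg v⟩

theorem exists_strongDual_le_of_sublinear {N : E → ℝ} {C : ℝ}
    (N_hom : ∀ c : ℝ, 0 < c → ∀ v, N (c • v) = c * N v)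
    (N_add : ∀ v w, N (v + w) ≤ N v + N w) (N_le : ∀ v, N v ≤ C * ‖v‖) :
    ∃ φ : StrongDual ℝ E, ∀ v, φ v ≤ N v := by
  have N_zero : N 0 = 0 := by
    have h := N_hom 2 two_pos 0
    rw [smul_zero] at h
    linarith
  obtain ⟨g, -, hg⟩ := exists_extension_of_le_sublinear ⟨⊥, 0⟩ N N_hom N_add fun v => by
    simp [(Submodule.mem_bot ℝ).1 v.2, N_zero]
  have hg_bound (v : E) : |g v| ≤ C * ‖v‖ :=
    g.abs_apply_le_of_le_mul_norm (fun w => (hg w).trans (N_le w)) v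
  exact ⟨g.mkContinuous C hg_bound, hg⟩

end HahnBanach

theorem Filter.map_prod_mul_left_nhdsGT_zero {α : Type*} (F : Filter α) {c : ℝ} (hc : 0 < c) :
    map (fun q : α × ℝ => (q.1, c * q.2)) (F ×ˢ 𝓝[>] 0) = F ×ˢ 𝓝[>] 0 := by
  have hmap : map (c * ·) (𝓝[>] (0 : ℝ)) = 𝓝[>] 0 := by
    rw [map_eq_comap_of_inverse (n := (c⁻¹ * ·)), comap_mulLeft_nhdsGT_zero (inv_pos.2 hc)]
    · ext t; simp [hc.ne']
    · ext t; simp [hc.ne']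
  rw [show (fun q : α × ℝ => (q.1, c * q.2)) = Prod.map id (c * ·) from rfl,
    ← prod_map_map_eq', map_id, hmap]

section Clarke

variable {X : Type*} [NormedAddCommGroup X] [NormedSpace ℝ X]

noncomputable def clarkeQuotient (f : X → ℝ) (h : X) (q : X × ℝ) : ℝ :=
  (f (q.1 + q.2 • h) - f q.1) / q.2

theorem clarkeDeriv_eq_limsup_clarkeQuotient (f : X → ℝ) (x h : X) :
    clarkeDeriv f x h = limsup (clarkeQuotient f h) (𝓝 x ×ˢ 𝓝[>] 0) :=
  rfl

theorem tendsto_add_smul_nhds_prod_nhdsGT (x h : X) :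
    Tendsto (fun q : X × ℝ => (q.1 + q.2 • h, q.2)) (𝓝 x ×ˢ 𝓝[>] (0 : ℝ)) (𝓝 x ×ˢ 𝓝[>] 0) := by
  refine Tendsto.prodMk ?_ tendsto_snd
  have ht : Tendsto (fun q : X × ℝ => q.2) (𝓝 x ×ˢ 𝓝[>] 0) (𝓝 0) :=
    tendsto_snd.mono_right nhdsWithin_le_nhds
  simpa using tendsto_fst.add (ht.smul_const h)

theorem clarkeSubdiff_eq_iInter (f : X → ℝ) (x : X) :
    clarkeSubdiff f x = ⋂ h, {φ | φ h ≤ clarkeDeriv f x h} :=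
  ofPred_forall _

theorem convex_clarkeSubdiff (f : X → ℝ) (x : X) : Convex ℝ (clarkeSubdiff f x) := by
  rw [clarkeSubdiff_eq_iInter]
  exact convex_iInter fun h => convex_halfSpace_le ⟨fun _ _ => rfl, fun _ _ => rfl⟩ _

theorem isClosed_toWeakDual_image_clarkeSubdiff (f : X → ℝ) (x : X) :
    IsClosed (StrongDual.toWeakDual '' clarkeSubdiff f x) := by
  rw [LinearEquiv.image_eq_preimage_symm, clarkeSubdiff_eq_iInter, preimage_iInter]
  exact isClosed_iInter fun h => isClosed_le (WeakDual.eval_continuous h) continuous_const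

variable {f : X → ℝ} {x : X} {K : NNReal} {s : Set X}

theorem eventually_abs_clarkeQuotient_le (hs : s ∈ 𝓝 x) (hL : LipschitzOnWith K f s) (h : X) :
    ∀ᶠ q in 𝓝 x ×ˢ 𝓝[>] 0, |clarkeQuotient f h q| ≤ K * ‖h‖ := by
  filter_upwards [tendsto_fst.eventually_mem hs,
    (tendsto_add_smul_nhds_prod_nhdsGT x h).fst.eventually_mem hs,
    tendsto_snd.eventually_mem self_mem_nhdsWithin] with q hy hyt (ht : 0 < q.2)
  have hdist := hL.dist_le_mul _ hyt _ hy
  rw [Real.dist_eq, dist_eq_norm, add_sub_cancel_left, norm_smul, Real.norm_of_nonneg ht.le]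
    at hdist
  rw [clarkeQuotient, abs_div, abs_of_pos ht, div_le_iff₀ ht]
  linarith

theorem isBoundedUnder_clarkeQuotient (hs : s ∈ 𝓝 x) (hL : LipschitzOnWith K f s) (h : X) :
    IsBoundedUnder (· ≤ ·) (𝓝 x ×ˢ 𝓝[>] 0) (clarkeQuotient f h) ∧
      IsBoundedUnder (· ≥ ·) (𝓝 x ×ˢ 𝓝[>] 0) (clarkeQuotient f h) :=
  isBoundedUnder_le_abs.1 <|
    isBoundedUnder_of_eventually_le (eventually_abs_clarkeQuotient_le hs hL h)

theorem clarkeDeriv_le (hs : s ∈ 𝓝 x) (hL : LipschitzOnWith K f s) (h : X) :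
    clarkeDeriv f x h ≤ K * ‖h‖ :=
  limsup_le_of_le (isBoundedUnder_clarkeQuotient hs hL h).2.isCoboundedUnder_le
    ((eventually_abs_clarkeQuotient_le hs hL h).mono fun _ hq => (abs_le.1 hq).2)

theorem clarkeDeriv_smul (hs : s ∈ 𝓝 x) (hL : LipschitzOnWith K f s) {c : ℝ} (hc : 0 < c)
    (h : X) : clarkeDeriv f x (c • h) = c * clarkeDeriv f x h := by
  have hquot : clarkeQuotient f (c • h) =
      ((c * ·) ∘ clarkeQuotient f h) ∘ fun q => (q.1, c * q.2) := by
    ext q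
    simp only [clarkeQuotient, Function.comp_apply, smul_smul, mul_comm q.2 c]
    rw [mul_div_assoc', mul_div_mul_left _ _ hc.ne']
  have hmono : Monotone (c * ·) := fun _ _ hab => mul_le_mul_of_nonneg_left hab hc.le
  obtain ⟨hbdd, hcobdd⟩ := isBoundedUnder_clarkeQuotient hs hL h
  rw [clarkeDeriv_eq_limsup_clarkeQuotient, hquot, limsup_comp,
    map_prod_mul_left_nhdsGT_zero _ hc,
    ← hmono.map_limsup_of_continuousAt _ (continuous_const_mul c).continuousAt hbdd
      hcobdd.isCoboundedUnder_le, clarkeDeriv_eq_limsup_clarkeQuotient]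

theorem clarkeDeriv_add_le (hs : s ∈ 𝓝 x) (hL : LipschitzOnWith K f s) (h₁ h₂ : X) :
    clarkeDeriv f x (h₁ + h₂) ≤ clarkeDeriv f x h₁ + clarkeDeriv f x h₂ := by
  set L := 𝓝 x ×ˢ 𝓝[>] (0 : ℝ)
  set shift : X × ℝ → X × ℝ := fun q => (q.1 + q.2 • h₁, q.2)
  have hquot : clarkeQuotient f (h₁ + h₂) = clarkeQuotient f h₁ + clarkeQuotient f h₂ ∘ shift := by
    ext q
    simp only [clarkeQuotient, Pi.add_apply, Function.comp_apply, shift, smul_add, add_assoc]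
    ring
  obtain ⟨hbdd₁, hcobdd₁⟩ := isBoundedUnder_clarkeQuotient hs hL h₁
  obtain ⟨hbdd₂, hcobdd₂⟩ := isBoundedUnder_clarkeQuotient hs hL h₂
  have hshift : Tendsto shift L L := tendsto_add_smul_nhds_prod_nhdsGT x h₁
  have hcobdd_shift := hshift.isBoundedUnder_comp hcobdd₂
  calc clarkeDeriv f x (h₁ + h₂)
      ≤ limsup (clarkeQuotient f h₁) L + limsup (clarkeQuotient f h₂ ∘ shift) L := by
        rw [clarkeDeriv_eq_limsup_clarkeQuotient, hquot]
        exact limsup_add_le hcobdd₁ hbdd₁ hcobdd_shift.isCoboundedUnder_le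
          (hshift.isBoundedUnder_comp hbdd₂)
    _ ≤ clarkeDeriv f x h₁ + clarkeDeriv f x h₂ :=
        add_le_add le_rfl (hshift.limsup_comp_le_limsup
          (isBoundedUnder_map_iff.2 hcobdd_shift).isCoboundedUnder_le hbdd₂)

theorem clarkeSubdiff_nonempty (hs : s ∈ 𝓝 x) (hL : LipschitzOnWith K f s) :
    (clarkeSubdiff f x).Nonempty :=
  exists_strongDual_le_of_sublinear (fun _ hc h => clarkeDeriv_smul hs hL hc h)
    (clarkeDeriv_add_le hs hL) (clarkeDeriv_le hs hL)

theorem norm_le_of_mem_clarkeSubdiff (hs : s ∈ 𝓝 x) (hL : LipschitzOnWith K f s)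
    {φ : StrongDual ℝ X} (hφ : φ ∈ clarkeSubdiff f x) : ‖φ‖ ≤ K :=
  φ.opNorm_le_bound K.coe_nonneg <| (φ : X →ₗ[ℝ] ℝ).abs_apply_le_of_le_mul_norm fun v =>
    (hφ v).trans (clarkeDeriv_le hs hL v)

theorem isCompact_toWeakDual_image_clarkeSubdiff (hs : s ∈ 𝓝 x) (hL : LipschitzOnWith K f s) :
    IsCompact (StrongDual.toWeakDual '' clarkeSubdiff f x) := by
  refine WeakDual.isCompact_of_bounded_of_closed ((WeakDual.isBounded_closedBall 0 K).subset ?_)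
    (isClosed_toWeakDual_image_clarkeSubdiff f x)
  rintro _ ⟨φ, hφ, rfl⟩
  simpa using norm_le_of_mem_clarkeSubdiff hs hL hφ

end Clarke

theorem clarke_subdifferential_properties_general
    {X : Type*} [NormedAddCommGroup X] [NormedSpace ℝ X]
    (f : X → ℝ) (x : X) (K : NNReal)
    (hK : ∃ s ∈ 𝓝 x, LipschitzOnWith K f s) :
    (clarkeSubdiff f x).Nonempty ∧
    Convex ℝ (clarkeSubdiff f x) ∧
    (∀ φ ∈ clarkeSubdiff f x, ‖φ‖ ≤ (K : ℝ)) ∧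
    IsCompact (StrongDual.toWeakDual '' (clarkeSubdiff f x)) := by
  obtain ⟨s, hs, hL⟩ := hK
  exact ⟨clarkeSubdiff_nonempty hs hL, convex_clarkeSubdiff f x,
    fun _ => norm_le_of_mem_clarkeSubdiff hs hL, isCompact_toWeakDual_image_clarkeSubdiff hs hL⟩

theorem clarke_subdifferential_properties
    {X : Type*} [NormedAddCommGroup X] [NormedSpace ℝ X] [CompleteSpace X]
    (f : X → ℝ) (hf : LocallyLipschitz f) (x : X) (K : NNReal)
    (hK : ∃ s ∈ 𝓝 x, LipschitzOnWith K f s) :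
    (clarkeSubdiff f x).Nonempty ∧
    Convex ℝ (clarkeSubdiff f x) ∧
    (∀ φ ∈ clarkeSubdiff f x, ‖φ‖ ≤ (K : ℝ)) ∧
    IsCompact (StrongDual.toWeakDual '' (clarkeSubdiff f x)) :=
  clarke_subdifferential_properties_general f x K hK
end

section
/- Let Ω be a set, let p, r : Ω → ℝ satisfy 1 < p⁻ ≤ p(x) ≤ p⁺ < ∞ and 1 ≤ r(x) ≤ r⁺ < ∞ for all x ∈ Ω, let θ ∈ ℝ with p⁺ < θ and r⁺ ≤ θ, and let μ > 0. Let j : Ω × ℝ → ℝ and assume (i) there exists δ > 0 such that j(x,t) ≤ −(μ/2)|t|^{p(x)} for all x ∈ Ω and all t with |t| ≤ δ, and (ii) there are constants a₁, c₁ > 0 with |j(x,t)| ≤ a₁|t| + c₁|t|^{r(x)} for all x ∈ Ω and t ∈ ℝ. Then there exists γ > 0 such that j(x,t) ≤ −(μ/2)|t|^{p(x)} + γ|t|^{θ} for all x ∈ Ω and all t ∈ ℝ. -/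
/-!
Near zero the claim is hypothesis (i). Away from zero, for `|t| > δ`, every power `|t| ^ s`
with `1 ≤ s ≤ θ` is at most `max (δ ^ (1 - θ)) 1 * |t| ^ θ`, a constant independent of `s`;
so the growth bound (ii) and the term `(μ / 2) * |t| ^ p(x)` are both absorbed into `γ * |t| ^ θ`.
-/

namespace Real

lemma rpow_sub_le_max_of_le {δ u s lo θ : ℝ} (hδ : 0 < δ) (hu : δ ≤ u) (hlo : lo ≤ s)
    (hsθ : s ≤ θ) : u ^ (s - θ) ≤ max (δ ^ (lo - θ)) 1 := by
  rcases le_or_gt 1 u with hu1 | hu1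
  · exact (rpow_le_one_of_one_le_of_nonpos hu1 (by linarith)).trans (le_max_right _ _)
  · calc u ^ (s - θ) ≤ u ^ (lo - θ) :=
          rpow_le_rpow_of_exponent_ge (hδ.trans_le hu) hu1.le (by linarith)
      _ ≤ δ ^ (lo - θ) := rpow_le_rpow_of_nonpos hδ hu (by linarith)
      _ ≤ max (δ ^ (lo - θ)) 1 := le_max_left _ _

lemma rpow_le_max_mul_rpow_of_le {δ u s lo θ : ℝ} (hδ : 0 < δ) (hu : δ ≤ u) (hlo : lo ≤ s)
    (hsθ : s ≤ θ) : u ^ s ≤ max (δ ^ (lo - θ)) 1 * u ^ θ := by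
  have hu0 : 0 < u := hδ.trans_le hu
  calc u ^ s = u ^ (s - θ) * u ^ θ := by rw [← rpow_add hu0, sub_add_cancel]
    _ ≤ max (δ ^ (lo - θ)) 1 * u ^ θ := by
        gcongr
        exact rpow_sub_le_max_of_le hδ hu hlo hsθ

end Real

theorem potential_upper_bound_near_zero
    {Ω : Type*} (p r : Ω → ℝ) (pminus pplus rplus θ μ : ℝ)
    (hp1 : 1 < pminus)
    (hp : ∀ x, pminus ≤ p x ∧ p x ≤ pplus)
    (hr : ∀ x, 1 ≤ r x ∧ r x ≤ rplus)
    (hθp : pplus < θ) (hθr : rplus ≤ θ) (hμ : 0 < μ)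
    (j : Ω → ℝ → ℝ)
    (δ : ℝ) (hδ : 0 < δ)
    (hsmall : ∀ x, ∀ t : ℝ, |t| ≤ δ → j x t ≤ -(μ / 2) * |t| ^ p x)
    (a₁ c₁ : ℝ) (ha₁ : 0 < a₁) (hc₁ : 0 < c₁)
    (hgrowth : ∀ x, ∀ t : ℝ, |j x t| ≤ a₁ * |t| + c₁ * |t| ^ r x) :
    ∃ γ : ℝ, 0 < γ ∧ ∀ x, ∀ t : ℝ, j x t ≤ -(μ / 2) * |t| ^ p x + γ * |t| ^ θ := by
  set C := max (δ ^ (1 - θ)) 1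
  refine ⟨(a₁ + c₁ + μ / 2) * C, by positivity, fun x t => ?_⟩
  obtain ⟨hpx_lo, hpx_hi⟩ := hp x
  obtain ⟨hrx_lo, hrx_hi⟩ := hr x
  rcases le_or_gt |t| δ with hsm | hlg
  · have : 0 ≤ (a₁ + c₁ + μ / 2) * C * |t| ^ θ := by positivity
    linarith [hsmall x t hsm]
  · have bound {s : ℝ} (hs1 : 1 ≤ s) (hsθ : s ≤ θ) : |t| ^ s ≤ C * |t| ^ θ :=
      Real.rpow_le_max_mul_rpow_of_le hδ hlg.le hs1 hsθ
    have ht : |t| ≤ C * |t| ^ θ := by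
      simpa using bound le_rfl (by linarith)
    have htr := bound hrx_lo (by linarith)
    have htp := bound (s := p x) (by linarith) (by linarith)
    linarith [(abs_le.mp (hgrowth x t)).2, mul_le_mul_of_nonneg_left ht ha₁.le,
      mul_le_mul_of_nonneg_left htr hc₁.le, mul_le_mul_of_nonneg_left htp (half_pos hμ).le]
end
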